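/- arXiv:2003.12749 — 10 statements merged into one kernel-verified Lean document; each statement's English description precedes it below -/
import Mathlib

section
/- Let n > 64 be an integer and let x, y, z be positive integers satisfying (n-1)^x + (n+2)^y = n^z. Then either x > z > 4n, or z > y > n. -/
open Real

/-- `(m+1)^(k+1) ≥ m^(k+1) + (k+1) m^k`. -/
lemma aux1 (m k : ℕ) : m ^ (k+1) + (k+1) * m ^ k ≤ (m+1) ^ (k+1) := by
  induction k with
  | zero => simp
  | succ k ih =>
    calc m ^ (k+2) + (k+2) * m ^ (k+1)
        ≤ m ^ (k+2) + (k+2) * m ^ (k+1) + (k+1) * m ^ k := Nat.le_add_right _ _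
      _ = (m+1) * (m ^ (k+1) + (k+1) * m ^ k) := by ring
      _ ≤ (m+1) * (m+1) ^ (k+1) := Nat.mul_le_mul_left _ ih
      _ = (m+1) ^ (k+2) := by ring

/-- For `m ≥ 64` and `1 ≤ y ≤ m+1`, `(m+3)^y < (y+1) m^y`. -/
lemma aux2 (m y : ℕ) (hm : 64 ≤ m) (hy1 : 1 ≤ y) (hy2 : y ≤ m + 1) :
    (m + 3) ^ y < (y + 1) * m ^ y := by
  have hmR : (64:ℝ) ≤ (m:ℝ) := by exact_mod_cast hm
  have hm0 : (0:ℝ) < (m:ℝ) := by linarith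
  have key : ((m:ℝ) + 3) ^ y < ((y:ℝ) + 1) * (m:ℝ) ^ y := by
    rcases (show y = 1 ∨ (2 ≤ y ∧ y ≤ 20) ∨ (21 ≤ y ∧ y ≤ 53) ∨ 54 ≤ y by omega) with
      h | ⟨h1, h2⟩ | ⟨h1, h2⟩ | h
    · subst h; push_cast; nlinarith
    · have hc : ((m:ℝ) + 3) ≤ (67/64) * m := by linarith
      have hyR : (2:ℝ) ≤ (y:ℝ) := by exact_mod_cast h1
      calc ((m:ℝ) + 3) ^ y ≤ ((67/64) * m) ^ y := pow_le_pow_left₀ (by linarith) hc y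
        _ = (67/64) ^ y * (m:ℝ) ^ y := mul_pow _ _ _
        _ ≤ (67/64) ^ 20 * (m:ℝ) ^ y :=
            mul_le_mul_of_nonneg_right (pow_le_pow_right₀ (by norm_num) h2)
              (pow_nonneg hm0.le y)
        _ < 3 * (m:ℝ) ^ y := by
            have h3 : ((67:ℝ)/64) ^ 20 < 3 := by norm_num
            exact mul_lt_mul_of_pos_right h3 (pow_pos hm0 y)
        _ ≤ ((y:ℝ) + 1) * (m:ℝ) ^ y :=
            mul_le_mul_of_nonneg_right (by linarith) (pow_nonneg hm0.le y)
    · have hc : ((m:ℝ) + 3) ≤ (67/64) * m := by linarith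
      have hyR : (21:ℝ) ≤ (y:ℝ) := by exact_mod_cast h1
      calc ((m:ℝ) + 3) ^ y ≤ ((67/64) * m) ^ y := pow_le_pow_left₀ (by linarith) hc y
        _ = (67/64) ^ y * (m:ℝ) ^ y := mul_pow _ _ _
        _ ≤ (67/64) ^ 53 * (m:ℝ) ^ y :=
            mul_le_mul_of_nonneg_right (pow_le_pow_right₀ (by norm_num) h2)
              (pow_nonneg hm0.le y)
        _ < 12 * (m:ℝ) ^ y := by
            have h3 : ((67:ℝ)/64) ^ 53 < 12 := by norm_num
            exact mul_lt_mul_of_pos_right h3 (pow_pos hm0 y)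
        _ ≤ ((y:ℝ) + 1) * (m:ℝ) ^ y :=
            mul_le_mul_of_nonneg_right (by linarith) (pow_nonneg hm0.le y)
    · have hyR : (54:ℝ) ≤ (y:ℝ) := by exact_mod_cast h
      have hym : (y:ℝ) ≤ (m:ℝ) + 1 := by exact_mod_cast hy2
      have hc : ((m:ℝ) + 3) ≤ Real.exp (3 / m) * m := by
        have h1 := Real.add_one_le_exp (3 / (m:ℝ))
        have h2 := mul_le_mul_of_nonneg_right h1 hm0.le
        have e : (3 / (m:ℝ) + 1) * m = m + 3 := by field_simp; ring
        linarith [e ▸ h2]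
      calc ((m:ℝ) + 3) ^ y ≤ (Real.exp (3 / m) * m) ^ y := pow_le_pow_left₀ (by linarith) hc y
        _ = Real.exp (3 / m) ^ y * (m:ℝ) ^ y := mul_pow _ _ _
        _ = Real.exp ((y:ℝ) * (3 / m)) * (m:ℝ) ^ y := by rw [← Real.exp_nat_mul]
        _ ≤ Real.exp 4 * (m:ℝ) ^ y := by
            have h3 : (y:ℝ) * (3 / m) ≤ 4 := by
              rw [mul_div_assoc', div_le_iff₀ hm0]; linarith
            exact mul_le_mul_of_nonneg_right (Real.exp_le_exp.mpr h3) (pow_nonneg hm0.le y)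
        _ < 55 * (m:ℝ) ^ y := by
            have h4 : Real.exp 4 < 55 := by
              have e4 : Real.exp 4 = (Real.exp 1) ^ 4 := by
                rw [← Real.exp_nat_mul]; norm_num
              have h5 : (Real.exp 1) ^ 4 < (2.7182818286:ℝ) ^ 4 :=
                pow_lt_pow_left₀ Real.exp_one_lt_d9 (Real.exp_pos 1).le (by norm_num)
              have h6 : (2.7182818286:ℝ) ^ 4 < 55 := by norm_num
              linarith [e4 ▸ h5]
            exact mul_lt_mul_of_pos_right h4 (pow_pos hm0 y)
        _ ≤ ((y:ℝ) + 1) * (m:ℝ) ^ y :=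
            mul_le_mul_of_nonneg_right (by linarith) (pow_nonneg hm0.le y)
  exact_mod_cast key

/-- For `m ≥ 64` and `z ≤ 4(m+1)`, `(m+1)^z ≤ m^(z+1)`. -/
lemma aux3 (m z : ℕ) (hm : 64 ≤ m) (hz : z ≤ 4 * (m + 1)) : (m + 1) ^ z ≤ m ^ (z + 1) := by
  have hmR : (64:ℝ) ≤ (m:ℝ) := by exact_mod_cast hm
  have hm0 : (0:ℝ) < (m:ℝ) := by linarith
  have h1 : (1:ℝ) ≤ 1 + 1 / (m:ℝ) := by
    have : (0:ℝ) ≤ 1 / (m:ℝ) := by positivity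
    linarith
  have key : ((m:ℝ) + 1) ^ z ≤ (m:ℝ) ^ (z + 1) := by
    have hb : (1 + 1 / (m:ℝ)) ^ z ≤ (m:ℝ) := by
      calc (1 + 1 / (m:ℝ)) ^ z ≤ (1 + 1 / (m:ℝ)) ^ (4 * (m + 1)) := pow_le_pow_right₀ h1 hz
        _ = ((1 + 1 / (m:ℝ)) ^ (m + 1)) ^ 4 := by rw [← pow_mul, Nat.mul_comm]
        _ ≤ (Real.exp 1 * (65/64)) ^ 4 := by
            have e1 : (1 + 1 / (m:ℝ)) ^ (m + 1) = (1 + 1 / (m:ℝ)) ^ m * (1 + 1 / (m:ℝ)) :=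
              pow_succ _ _
            have h2 : (1 + 1 / (m:ℝ)) ^ m ≤ Real.exp 1 := by
              have ha := Real.add_one_le_exp (1 / (m:ℝ))
              calc (1 + 1 / (m:ℝ)) ^ m ≤ (Real.exp (1 / m)) ^ m :=
                    pow_le_pow_left₀ (by linarith) (by linarith) m
                _ = Real.exp ((m:ℝ) * (1 / m)) := (Real.exp_nat_mul _ _).symm
                _ = Real.exp 1 := by rw [mul_one_div, div_self hm0.ne']
            have h3 : (1 + 1 / (m:ℝ)) ≤ 65/64 := by
              have h4 : 1 / (m:ℝ) ≤ 1 / 64 := by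
                apply one_div_le_one_div_of_le <;> linarith
              linarith
            rw [e1]
            apply pow_le_pow_left₀ (by positivity)
            exact mul_le_mul h2 h3 (by linarith) (Real.exp_pos 1).le
        _ ≤ (m:ℝ) := by
            have h4 : Real.exp 1 * (65/64) < 2.7182818286 * (65/64) := by
              have := Real.exp_one_lt_d9; linarith
            have h5 : (Real.exp 1 * (65/64)) ^ 4 < (2.7182818286 * (65/64) : ℝ) ^ 4 :=
              pow_lt_pow_left₀ h4 (by positivity) (by norm_num)
            have h6 : (2.7182818286 * (65/64) : ℝ) ^ 4 < 64 := by norm_num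
            linarith
    have e : ((m:ℝ) + 1) = (1 + 1 / (m:ℝ)) * m := by field_simp
    calc ((m:ℝ) + 1) ^ z = (1 + 1 / (m:ℝ)) ^ z * (m:ℝ) ^ z := by rw [e, mul_pow]
      _ ≤ (m:ℝ) * (m:ℝ) ^ z := mul_le_mul_of_nonneg_right hb (pow_nonneg hm0.le z)
      _ = (m:ℝ) ^ (z + 1) := by ring
  exact_mod_cast key

theorem stmt_2 (n x y z : ℕ) (hn : 64 < n) (hx : 0 < x) (hy : 0 < y) (hz : 0 < z)
    (heq : (n - 1) ^ x + (n + 2) ^ y = n ^ z) :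
    (x > z ∧ z > 4 * n) ∨ (z > y ∧ y > n) := by
  obtain ⟨m, rfl⟩ : ∃ m, n = m + 1 := ⟨n - 1, by omega⟩
  have hm : 64 ≤ m := by omega
  have hm0 : 0 < m := by omega
  have heq' : m ^ x + (m + 3) ^ y = (m + 1) ^ z := by
    simpa using heq
  have hzy : y < z := by
    by_contra hcon
    push_neg at hcon
    have h1 : (m+1) ^ z < (m+3) ^ z := Nat.pow_lt_pow_left (by omega) (by omega)
    have h2 : (m+3) ^ z ≤ (m+3) ^ y := Nat.pow_le_pow_right (by omega) hcon
    have h3 : (m+3) ^ y < (m+1) ^ z := by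
      rw [← heq']; exact Nat.lt_add_of_pos_left (pow_pos hm0 x)
    exact lt_irrefl _ (((h1.trans_le h2)).trans h3)
  by_cases hxz : x ≤ z
  · right
    refine ⟨hzy, ?_⟩
    by_contra hyn
    push_neg at hyn
    obtain ⟨k, rfl⟩ : ∃ k, z = k + 1 := ⟨z - 1, by omega⟩
    have h1 : m ^ x ≤ m ^ (k+1) := Nat.pow_le_pow_right hm0 hxz
    have h2 := aux1 m k
    have h3 : (y+1) * m ^ y ≤ (k+1) * m ^ k :=
      Nat.mul_le_mul (by omega) (Nat.pow_le_pow_right hm0 (by omega))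
    have h5 : m ^ x + (k+1) * m ^ k ≤ m ^ x + (m+3) ^ y := by
      calc m ^ x + (k+1) * m ^ k
          ≤ m ^ (k+1) + (k+1) * m ^ k := Nat.add_le_add_right h1 _
        _ ≤ (m+1) ^ (k+1) := h2
        _ = m ^ x + (m+3) ^ y := heq'.symm
    have h4 : (y+1) * m ^ y ≤ (m+3) ^ y :=
      le_trans h3 (Nat.le_of_add_le_add_left h5)
    exact absurd h4 (Nat.not_le.mpr (aux2 m y hm hy hyn))
  · left
    push_neg at hxz
    refine ⟨hxz, ?_⟩
    by_contra hz4
    push_neg at hz4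
    have h1 : m ^ (z+1) ≤ m ^ x := Nat.pow_le_pow_right hm0 (by omega)
    have h2 : m ^ x < (m+1) ^ z := by
      rw [← heq']; exact Nat.lt_add_of_pos_right (pow_pos (by omega) y)
    have h3 := aux3 m z hm hz4
    exact lt_irrefl _ ((h1.trans_lt h2).trans_le h3)
end

section
/- For every integer n > 64 and every positive integer y, one has (n-1)^{y+1} + (n+2)^y ≠ n^{y+1}. -/
/-!
Put `m = n - 1`, so that the equation reads `m ^ (y + 1) + (m + 3) ^ y = (m + 1) ^ (y + 1)`.
Expanding `(m + 1) ^ (y + 1)` gives the lower bound `(m + 3) ^ y > (y + 1) * m ^ y`, which fails as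
soon as `3 y ≤ 4 m` (then `(1 + 3 / m) ^ y ≤ e ^ 4 < 64`, or a direct check when `y < 63`).
For the upper bound, every prime `p ∣ m + 3` is coprime to `m (m + 1)`; since
`(m + 3) ^ y = (m + 1) ^ (y + 1) - m ^ (y + 1)` and `(m + 1) / m` has order dividing
`g = gcd (y + 1, p - 1)` modulo `p`, lifting the exponent bounds the `p`-part of `(m + 3) ^ y` by
`((m + 1) ^ g - m ^ g) * (y + 1) / g < (m + 1) ^ (p - 1) * (y + 1)`. Multiplying over the prime
factors of `m + 3` gives `(m + 3) ^ y < (m + 1) ^ (m + 2) * (y + 1) ^ ω(m + 3)`, and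
`2 ^ ω(m + 3) ≤ m + 3` turns this into `3 y ≤ 4 m`.
-/

open Finset

lemma Nat.pow_succ_add_mul_pow_lt_succ_pow {m y : ℕ} (hm : 0 < m) (hy : 0 < y) :
    m ^ (y + 1) + (y + 1) * m ^ y < (m + 1) ^ (y + 1) := by
  induction y, hy using Nat.le_induction with
  | base => ring_nf; omega
  | succ y hy ih =>
    have hmy : 0 < m ^ y := pow_pos hm y
    calc m ^ (y + 2) + (y + 2) * m ^ (y + 1)
        < (m + 1) * (m ^ (y + 1) + (y + 1) * m ^ y) := by ring_nf; nlinarith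
      _ ≤ (m + 1) * (m + 1) ^ (y + 1) := by gcongr
      _ = (m + 1) ^ (y + 2) := by ring

lemma Finset.sum_sub_one_le_prod_sub_one (S : Finset ℕ) (hS : ∀ p ∈ S, 1 ≤ p) :
    ∑ p ∈ S, (p - 1) ≤ (∏ p ∈ S, p) - 1 := by
  induction S using Finset.induction_on with
  | empty => simp
  | insert a S ha ih =>
    rw [sum_insert ha, prod_insert ha]
    have ha1 : 1 ≤ a := hS a (mem_insert_self a S)
    have hsum := ih fun p hp => hS p (mem_insert_of_mem hp)
    have hprod : 1 ≤ ∏ p ∈ S, p := one_le_prod' fun p hp => hS p (mem_insert_of_mem hp)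
    have : a + ∏ p ∈ S, p ≤ a * ∏ p ∈ S, p + 1 := by nlinarith
    omega

lemma Nat.sum_primeFactors_sub_one_le (n : ℕ) : ∑ p ∈ n.primeFactors, (p - 1) ≤ n - 1 := by
  rcases eq_or_ne n 0 with rfl | hn
  · simp
  have := n.primeFactors.sum_sub_one_le_prod_sub_one fun p hp => (prime_of_mem_primeFactors hp).pos
  have := le_of_dvd (pos_of_ne_zero hn) (prod_primeFactors_dvd n)
  omega

lemma Nat.two_pow_card_primeFactors_le {n : ℕ} (hn : n ≠ 0) : 2 ^ n.primeFactors.card ≤ n :=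
  calc 2 ^ n.primeFactors.card = ∏ _p ∈ n.primeFactors, 2 := (prod_const 2).symm
    _ ≤ ∏ p ∈ n.primeFactors, p :=
        prod_le_prod' fun _ hp => (prime_of_mem_primeFactors hp).two_le
    _ ≤ n := le_of_dvd (pos_of_ne_zero hn) (prod_primeFactors_dvd n)

lemma ZMod.pow_gcd_card_sub_one_eq {p : ℕ} [Fact p.Prime] {a b : ZMod p} (ha : a ≠ 0)
    (hb : b ≠ 0) {N : ℕ} (h : a ^ N = b ^ N) : a ^ N.gcd (p - 1) = b ^ N.gcd (p - 1) := by
  have hN : (a / b) ^ N = 1 := by rw [div_pow, h, div_self (pow_ne_zero N hb)]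
  have hp : (a / b) ^ (p - 1) = 1 := pow_card_sub_one_eq_one (div_ne_zero ha hb)
  have := pow_gcd_eq_one.2 ⟨hN, hp⟩
  rwa [div_pow, div_eq_one_iff_eq (pow_ne_zero _ hb)] at this

lemma Nat.dvd_pow_sub_pow_iff_cast_eq {p a b N : ℕ} (hba : b ≤ a) :
    p ∣ a ^ N - b ^ N ↔ (a : ZMod p) ^ N = (b : ZMod p) ^ N := by
  rw [← Nat.modEq_iff_dvd' (Nat.pow_le_pow_left hba N), ← ZMod.natCast_eq_natCast_iff]
  push_cast
  exact eq_comm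

lemma pow_padicValNat_pow_sub_pow_lt {p a b N : ℕ} [Fact p.Prime] (hp : Odd p) (hba : b < a)
    (ha : ¬ p ∣ a) (hb : ¬ p ∣ b) (hN : 0 < N) (hdvd : p ∣ a ^ N - b ^ N) :
    p ^ padicValNat p (a ^ N - b ^ N) < a ^ (p - 1) * N := by
  set g := N.gcd (p - 1)
  obtain ⟨c, hc⟩ : g ∣ N := N.gcd_dvd_left (p - 1)
  have hg : 0 < g := Nat.gcd_pos_of_pos_left _ hN
  have hc0 : 0 < c := Nat.pos_of_mul_pos_left (hc ▸ hN)
  have hp2 : 2 ≤ p := (Fact.out : p.Prime).two_le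
  have hgp : g ≤ p - 1 := Nat.le_of_dvd (by omega) (N.gcd_dvd_right (p - 1))
  have hdvd_g : p ∣ a ^ g - b ^ g := by
    rw [Nat.dvd_pow_sub_pow_iff_cast_eq hba.le] at hdvd ⊢
    rw [← ZMod.natCast_eq_zero_iff] at ha hb
    exact ZMod.pow_gcd_card_sub_one_eq ha hb hdvd
  have hbg : b ^ g < a ^ g := Nat.pow_lt_pow_left hba hg.ne'
  have hpa : ¬ p ∣ a ^ g := fun h => ha ((Fact.out : p.Prime).dvd_of_dvd_pow h)
  have hLTE := padicValNat.pow_sub_pow hp hbg hdvd_g hpa hc0.ne'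
  rw [← pow_mul, ← pow_mul, ← hc] at hLTE
  calc p ^ padicValNat p (a ^ N - b ^ N)
      = p ^ padicValNat p (a ^ g - b ^ g) * p ^ padicValNat p c := by rw [hLTE, pow_add]
    _ ≤ (a ^ g - b ^ g) * c :=
        Nat.mul_le_mul (Nat.le_of_dvd (by omega) pow_padicValNat_dvd)
          (Nat.le_of_dvd hc0 pow_padicValNat_dvd)
    _ < a ^ g * c := by
        have hb0 : 0 < b := Nat.pos_of_ne_zero (by rintro rfl; exact hb (dvd_zero p))
        exact Nat.mul_lt_mul_of_pos_right (Nat.sub_lt (by omega) (pow_pos hb0 g)) hc0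
    _ ≤ a ^ (p - 1) * N :=
        Nat.mul_le_mul (Nat.pow_le_pow_right (by omega) hgp) (hc ▸ Nat.le_mul_of_pos_left c hg)

lemma not_dvd_of_dvd_add_three {m y p : ℕ} (hy : 0 < y)
    (heq : m ^ (y + 1) + (m + 3) ^ y = (m + 1) ^ (y + 1)) (hp : p.Prime) (hp3 : p ∣ m + 3) :
    ¬ p ∣ m ∧ ¬ p ∣ m + 1 := by
  have hdvd_iff : p ∣ m ↔ p ∣ m + 1 := by
    rw [← hp.prime.dvd_pow_iff_dvd (a := m) y.succ_ne_zero,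
      ← hp.prime.dvd_pow_iff_dvd (a := m + 1) y.succ_ne_zero, ← heq,
      Nat.dvd_add_left (dvd_pow hp3 hy.ne')]
  have hm : ¬ p ∣ m := fun h => hp.not_dvd_one ((Nat.dvd_add_right h).1 (hdvd_iff.1 h))
  exact ⟨hm, hdvd_iff.not.1 hm⟩

lemma pow_factorization_add_three_pow_lt {m y p : ℕ} (hy : 0 < y)
    (heq : m ^ (y + 1) + (m + 3) ^ y = (m + 1) ^ (y + 1)) (hp : p ∈ ((m + 3) ^ y).primeFactors) :
    p ^ ((m + 3) ^ y).factorization p < (m + 1) ^ (p - 1) * (y + 1) := by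
  have hp' : p.Prime := Nat.prime_of_mem_primeFactors hp
  have hp3 : p ∣ m + 3 := hp'.dvd_of_dvd_pow (Nat.dvd_of_mem_primeFactors hp)
  obtain ⟨hpm, hpm1⟩ := not_dvd_of_dvd_add_three hy heq hp' hp3
  have hodd : Odd p := hp'.odd_of_ne_two (by rintro rfl; omega)
  have hdiff : (m + 3) ^ y = (m + 1) ^ (y + 1) - m ^ (y + 1) := by omega
  have : Fact p.Prime := ⟨hp'⟩
  rw [Nat.factorization_def _ hp', hdiff]
  exact pow_padicValNat_pow_sub_pow_lt hodd m.lt_succ_self hpm1 hpm y.succ_pos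
    (hdiff ▸ dvd_pow hp3 hy.ne')

lemma add_three_pow_lt {m y : ℕ} (hy : 0 < y)
    (heq : m ^ (y + 1) + (m + 3) ^ y = (m + 1) ^ (y + 1)) :
    (m + 3) ^ y < (m + 1) ^ (m + 2) * (y + 1) ^ (m + 3).primeFactors.card := by
  have hD : (m + 3) ^ y ≠ 0 := pow_ne_zero y (by omega)
  rw [← Nat.primeFactors_pow (m + 3) hy.ne']
  calc (m + 3) ^ y = ∏ p ∈ ((m + 3) ^ y).primeFactors, p ^ ((m + 3) ^ y).factorization p :=
        Nat.prod_primeFactors_pow_factorization hD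
    _ < ∏ p ∈ ((m + 3) ^ y).primeFactors, (m + 1) ^ (p - 1) * (y + 1) :=
        prod_lt_prod_of_nonempty (fun p hp => pow_pos (Nat.prime_of_mem_primeFactors hp).pos _)
          (fun p hp => pow_factorization_add_three_pow_lt hy heq hp)
          (Nat.nonempty_primeFactors.2 (Nat.one_lt_pow hy.ne' (by omega)))
    _ = (m + 1) ^ (∑ p ∈ ((m + 3) ^ y).primeFactors, (p - 1)) *
          (y + 1) ^ ((m + 3) ^ y).primeFactors.card := by
        rw [prod_mul_distrib, prod_const, prod_pow_eq_pow_sum]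
    _ ≤ (m + 1) ^ (m + 2) * (y + 1) ^ ((m + 3) ^ y).primeFactors.card := by
        gcongr
        · omega
        · rw [Nat.primeFactors_pow (m + 3) hy.ne']
          have := (m + 3).sum_primeFactors_sub_one_le
          omega

lemma three_mul_le_four_mul_of_pow_lt {m y w : ℕ} (hm : 21 ≤ m) (hw : 2 ^ w ≤ m + 3)
    (h : (m + 3) ^ y < (m + 1) ^ (m + 2) * (y + 1) ^ w) : 3 * y ≤ 4 * m := by
  by_contra! hlt
  obtain ⟨k, rfl⟩ : ∃ k, y = m + 2 + k := ⟨y - (m + 2), by omega⟩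
  have hk : m + 2 + k + 1 ≤ 2 ^ k := by
    have h8 : 2 ^ k = 2 ^ 3 * 2 ^ (k - 3) := by rw [← pow_add]; congr 1; omega
    have := Nat.lt_two_pow_self (n := k - 3)
    omega
  refine h.not_ge ?_
  calc (m + 1) ^ (m + 2) * (m + 2 + k + 1) ^ w ≤ (m + 3) ^ (m + 2) * (2 ^ k) ^ w := by
        gcongr; omega
    _ = (m + 3) ^ (m + 2) * (2 ^ w) ^ k := by rw [← pow_mul, ← pow_mul, mul_comm k]
    _ ≤ (m + 3) ^ (m + 2) * (m + 3) ^ k := by gcongr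
    _ = (m + 3) ^ (m + 2 + k) := (pow_add _ _ _).symm

lemma Real.add_pow_le_exp_mul_pow {x c : ℝ} (hx : 0 < x) (hc : 0 ≤ c) (y : ℕ) :
    (x + c) ^ y ≤ exp (c * y / x) * x ^ y := by
  have hstep : x + c ≤ exp (c / x) * x := by
    have := add_one_le_exp (c / x)
    calc x + c = (c / x + 1) * x := by field_simp; ring
      _ ≤ exp (c / x) * x := by gcongr
  calc (x + c) ^ y ≤ (exp (c / x) * x) ^ y := by gcongr
    _ = exp (c * y / x) * x ^ y := by rw [mul_pow, ← exp_nat_mul]; ring_nf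

lemma add_three_pow_le_mul_pow {m y : ℕ} (hm : 64 ≤ m) (hy : 3 * y ≤ 4 * m) :
    (m + 3) ^ y ≤ (y + 1) * m ^ y := by
  rcases lt_or_ge y 63 with hy63 | hy63
  · have h67 : 67 ^ y ≤ (y + 1) * 64 ^ y :=
      (by decide : ∀ y < 63, 67 ^ y ≤ (y + 1) * 64 ^ y) y hy63
    refine Nat.le_of_mul_le_mul_left ?_ (pow_pos (by norm_num : 0 < 64) y)
    calc 64 ^ y * (m + 3) ^ y = (64 * (m + 3)) ^ y := (mul_pow _ _ _).symm
      _ ≤ (67 * m) ^ y := Nat.pow_le_pow_left (by omega) y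
      _ = 67 ^ y * m ^ y := mul_pow _ _ _
      _ ≤ (y + 1) * 64 ^ y * m ^ y := by gcongr
      _ = 64 ^ y * ((y + 1) * m ^ y) := by ring
  · have hm0 : (0 : ℝ) < m := by exact_mod_cast (by omega : 0 < m)
    have hexp : 3 * (y : ℝ) / m ≤ 4 := by
      rw [div_le_iff₀ hm0]; exact_mod_cast hy
    have hreal : ((m : ℝ) + 3) ^ y ≤ (y + 1) * (m : ℝ) ^ y :=
      calc ((m : ℝ) + 3) ^ y ≤ Real.exp (3 * y / m) * (m : ℝ) ^ y :=
            Real.add_pow_le_exp_mul_pow hm0 (by norm_num) y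
        _ ≤ Real.exp 4 * (m : ℝ) ^ y := by gcongr
        _ ≤ 64 * (m : ℝ) ^ y := by gcongr; exact Behrend.exp_four_lt.le
        _ ≤ (y + 1) * (m : ℝ) ^ y := by gcongr; exact_mod_cast (by omega : 64 ≤ y + 1)
    exact_mod_cast hreal

theorem stmt_3 (n y : ℕ) (hn : 64 < n) (hy : 0 < y) :
    (n - 1) ^ (y + 1) + (n + 2) ^ y ≠ n ^ (y + 1) := by
  obtain ⟨m, rfl⟩ : ∃ m, n = m + 1 := ⟨n - 1, by omega⟩
  rw [Nat.add_sub_cancel, show m + 1 + 2 = m + 3 from rfl]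
  intro heq
  have hlow : (y + 1) * m ^ y < (m + 3) ^ y := by
    have := Nat.pow_succ_add_mul_pow_lt_succ_pow (m := m) (by omega) hy
    omega
  have hy_le : 3 * y ≤ 4 * m := three_mul_le_four_mul_of_pow_lt (by omega)
    (Nat.two_pow_card_primeFactors_le (by omega)) (add_three_pow_lt hy heq)
  exact (add_three_pow_le_mul_pow (by omega) hy_le).not_gt hlow
end

section
/- If n ≥ 2 and y are positive integers with 1 ≤ y ≤ 3 such that (n-1)^{y+1} + (n+2)^y = n^{y+1}, then n = 3 and y = 1. -/
theorem stmt_4 (n y : ℕ) (hn : 2 ≤ n) (hy1 : 1 ≤ y) (hy3 : y ≤ 3)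
    (heq : (n - 1) ^ (y + 1) + (n + 2) ^ y = n ^ (y + 1)) :
    n = 3 ∧ y = 1 := by
  obtain ⟨m, rfl⟩ : ∃ m, n = m + 2 := ⟨n - 2, by omega⟩
  have hs : m + 2 - 1 = m + 1 := by omega
  rw [hs] at heq
  interval_cases y
  · constructor
    · (ring_nf at heq; nlinarith [heq, sq_nonneg m])
    · rfl
  · exfalso
    have hm : m ≤ 2 := by (ring_nf at heq; nlinarith [heq, sq_nonneg m])
    interval_cases m <;> simp_all
  · exfalso
    have hm : m ≤ 3 := by (ring_nf at heq; nlinarith [heq, sq_nonneg m])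
    interval_cases m <;> simp_all
end

section
/- The exponential Diophantine equation 2^x + 5^y = 3^z has exactly the solutions (x, y, z) = (1, 2, 3) and (x, y, z) = (2, 1, 2) in positive integers. -/
set_option maxRecDepth 100000

private lemma nat_pow_cycle (a d m : ℕ) (h : a ^ d % m = 1 % m) (y : ℕ) :
    a ^ y % m = a ^ (y % d) % m := by
  conv_lhs => rw [← Nat.div_add_mod y d]
  rw [pow_add, pow_mul, Nat.mul_mod, Nat.pow_mod, h, ← Nat.pow_mod, one_pow,
    ← Nat.mul_mod, one_mul]

theorem stmt_6 (x y z : ℕ) (hx : 0 < x) (hy : 0 < y) (hz : 0 < z) :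
    2 ^ x + 5 ^ y = 3 ^ z ↔ (x, y, z) = (1, 2, 3) ∨ (x, y, z) = (2, 1, 2) := by
  constructor
  · intro h
    by_cases hx1 : x = 1
    · -- case x = 1
      subst hx1
      by_cases hz5 : z < 5
      · interval_cases z
        · have h5 : (5:ℕ) ∣ 5 ^ y := dvd_pow_self 5 hy.ne'
          omega
        · have h5 : (5:ℕ) ∣ 5 ^ y := dvd_pow_self 5 hy.ne'
          omega
        · have hy2 : y = 2 := by
            have h25 : 5 ^ y = 5 ^ 2 := by norm_num at h ⊢; omega
            exact Nat.pow_right_injective (by norm_num) h25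
          subst hy2; left; rfl
        · have h5 : (5:ℕ) ∣ 5 ^ y := dvd_pow_self 5 hy.ne'
          omega
      · push_neg at hz5
        exfalso
        have hdvd : (243:ℕ) ∣ 3 ^ z := by
          have := pow_dvd_pow 3 hz5
          norm_num at this
          exact this
        have h5y : 5 ^ y % 243 = 241 := by omega
        rw [nat_pow_cycle 5 162 243 (by decide) y] at h5y
        have key : ∀ r < 162, 5 ^ r % 243 = 241 → r % 27 = 20 := by decide
        have h20 : y % 27 = 20 := by
          have hk := key (y % 162) (Nat.mod_lt y (by norm_num)) h5y
          omega
        have ha : 5 ^ y % 109 = 5 ^ 20 % 109 := by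
          rw [nat_pow_cycle 5 27 109 (by decide) y, h20]
        have hb : 3 ^ z % 109 = 3 ^ (z % 27) % 109 :=
          nat_pow_cycle 3 27 109 (by decide) z
        have hmain : (2 ^ 1 % 109 + 5 ^ 20 % 109) % 109 = 3 ^ (z % 27) % 109 := by
          rw [← ha, ← hb, ← Nat.add_mod, h]
        have key2 : ∀ r < 27, (2 ^ 1 % 109 + 5 ^ 20 % 109) % 109 ≠ 3 ^ r % 109 := by
          decide
        exact key2 (z % 27) (Nat.mod_lt z (by norm_num)) hmain
    · by_cases hx2 : x = 2
      · -- case x = 2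
        subst hx2
        have h5mod : 5 ^ y % 4 = 1 := by rw [Nat.pow_mod]; norm_num
        have h34 : 3 ^ z % 4 = 1 := by omega
        rw [nat_pow_cycle 3 2 4 (by decide) z] at h34
        have hzE : z % 2 = 0 := by
          rcases Nat.mod_two_eq_zero_or_one z with hp | hp
          · exact hp
          · rw [hp] at h34; norm_num at h34
        obtain ⟨c, hc⟩ : ∃ c, z = c * 2 := ⟨z / 2, by omega⟩
        have hc1 : 1 ≤ c := by omega
        have ht3 : 3 ≤ 3 ^ c := by
          calc (3:ℕ) = 3 ^ 1 := rfl
          _ ≤ 3 ^ c := Nat.pow_le_pow_right (by norm_num) hc1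
        have h' : 4 + 5 ^ y = (3 ^ c) ^ 2 := by
          rw [hc, pow_mul] at h; omega
        have hfac : (3 ^ c - 2) * (3 ^ c + 2) = 5 ^ y := by
          have h'' : (4:ℤ) + 5 ^ y = ((3:ℤ) ^ c) ^ 2 := by exact_mod_cast h'
          zify [show 2 ≤ 3 ^ c from by omega]
          linear_combination -h''
        have hd1 : (3 ^ c - 2) ∣ 5 ^ y := ⟨3 ^ c + 2, hfac.symm⟩
        have hd2 : (3 ^ c + 2) ∣ 5 ^ y := ⟨3 ^ c - 2, by rw [← hfac]; ring⟩
        obtain ⟨a, ha, hae⟩ := (Nat.dvd_prime_pow (by norm_num)).mp hd1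
        obtain ⟨b, hb, hbe⟩ := (Nat.dvd_prime_pow (by norm_num)).mp hd2
        rcases Nat.eq_zero_or_pos a with ha0 | ha1
        · rw [ha0, pow_zero] at hae
          have hcc : 3 ^ c = 3 ^ 1 := by omega
          have hc1' : c = 1 := Nat.pow_right_injective (by norm_num) hcc
          subst hc1'
          have hz2 : z = 2 := by omega
          subst hz2
          have hy1 : y = 1 := by
            have h51 : 5 ^ y = 5 ^ 1 := by norm_num at h ⊢; omega
            exact Nat.pow_right_injective (by norm_num) h51
          subst hy1; right; rfl
        · have h5d1 : (5:ℕ) ∣ 3 ^ c - 2 := by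
            rw [hae]; exact dvd_pow_self 5 (by omega)
          have hb1 : 1 ≤ b := by
            rcases Nat.eq_zero_or_pos b with hb0 | hbp
            · rw [hb0, pow_zero] at hbe; omega
            · exact hbp
          have h5d2 : (5:ℕ) ∣ 3 ^ c + 2 := by
            rw [hbe]; exact dvd_pow_self 5 (by omega)
          omega
      · -- case x ≥ 3
        exfalso
        have hx3 : 3 ≤ x := by omega
        have h8dvd : (8:ℕ) ∣ 2 ^ x := by
          have := pow_dvd_pow 2 hx3
          norm_num at this
          exact this
        have h5mod : 5 ^ y % 4 = 1 := by rw [Nat.pow_mod]; norm_num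
        have h34 : 3 ^ z % 4 = 1 := by omega
        rw [nat_pow_cycle 3 2 4 (by decide) z] at h34
        have hzE : z % 2 = 0 := by
          rcases Nat.mod_two_eq_zero_or_one z with hp | hp
          · exact hp
          · rw [hp] at h34; norm_num at h34
        -- mod 8 : y even
        have f3 : 3 ^ z % 8 = 1 := by
          rw [nat_pow_cycle 3 2 8 (by decide) z, hzE]; norm_num
        have h58 : 5 ^ y % 8 = 1 := by omega
        rw [nat_pow_cycle 5 2 8 (by decide) y] at h58
        have hyE : y % 2 = 0 := by
          rcases Nat.mod_two_eq_zero_or_one y with hp | hp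
          · exact hp
          · rw [hp] at h58; norm_num at h58
        obtain ⟨c, hc⟩ : ∃ c, z = c * 2 := ⟨z / 2, by omega⟩
        have hc1 : 1 ≤ c := by omega
        obtain ⟨b, hbdef⟩ : ∃ b, y = b * 2 := ⟨y / 2, by omega⟩
        have hb1 : 1 ≤ b := by omega
        have hs5 : 5 ≤ 5 ^ b := by
          calc (5:ℕ) = 5 ^ 1 := rfl
          _ ≤ 5 ^ b := Nat.pow_le_pow_right (by norm_num) hb1
        have ht3 : 3 ≤ 3 ^ c := by
          calc (3:ℕ) = 3 ^ 1 := rfl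
          _ ≤ 3 ^ c := Nat.pow_le_pow_right (by norm_num) hc1
        have hsq : 2 ^ x + (5 ^ b) ^ 2 = (3 ^ c) ^ 2 := by
          rw [hbdef, hc, pow_mul, pow_mul] at h; exact h
        have h2x : 1 ≤ 2 ^ x := Nat.one_le_two_pow
        have hst : 5 ^ b < 3 ^ c := by
          by_contra hle
          push_neg at hle
          have := Nat.pow_le_pow_left hle 2
          omega
        have hfac : (3 ^ c - 5 ^ b) * (3 ^ c + 5 ^ b) = 2 ^ x := by
          have h'' : (2:ℤ) ^ x + ((5:ℤ) ^ b) ^ 2 = ((3:ℤ) ^ c) ^ 2 := by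
            exact_mod_cast hsq
          zify [hst.le]
          linear_combination -h''
        have hd1 : (3 ^ c - 5 ^ b) ∣ 2 ^ x := ⟨3 ^ c + 5 ^ b, hfac.symm⟩
        have hd2 : (3 ^ c + 5 ^ b) ∣ 2 ^ x := ⟨3 ^ c - 5 ^ b, by rw [← hfac]; ring⟩
        obtain ⟨a, ha, hae⟩ := (Nat.dvd_prime_pow (by norm_num)).mp hd1
        obtain ⟨e, heb, hbe⟩ := (Nat.dvd_prime_pow (by norm_num)).mp hd2
        have he8 : 8 ≤ 2 ^ e := by omega
        have he3 : 3 ≤ e := by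
          by_contra hee
          push_neg at hee
          have : 2 ^ e ≤ 2 ^ 2 := Nat.pow_le_pow_right (by norm_num) (by omega)
          omega
        have h8d : (8:ℕ) ∣ 2 ^ e := by
          have := pow_dvd_pow 2 he3
          norm_num at this
          exact this
        have tmod : 3 ^ c % 2 = 1 := by
          rw [Nat.pow_mod]; norm_num
        have smod : 5 ^ b % 4 = 1 := by
          rw [Nat.pow_mod]; norm_num
        rcases a with _ | _ | a
        · rw [pow_zero] at hae
          omega
        · rw [pow_one] at hae
          omega
        · have h4d : (4:ℕ) ∣ 2 ^ (a + 2) := by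
            have := pow_dvd_pow 2 (show 2 ≤ a + 2 by omega)
            norm_num at this
            exact this
          rw [← hae] at h4d
          omega
  · rintro (h | h) <;>
      simp only [Prod.mk.injEq] at h <;>
      obtain ⟨rfl, rfl, rfl⟩ := h <;>
      norm_num
end

section
/- The exponential Diophantine equation 4^x + 7^y = 5^z has no solutions in positive integers x, y, z. -/
theorem stmt_7 : ¬ ∃ x y z : ℕ, 0 < x ∧ 0 < y ∧ 0 < z ∧
    4 ^ x + 7 ^ y = 5 ^ z := by
  rintro ⟨x, y, z, hx, hy, hz, h⟩
  -- z odd, via mod 3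
  have hz2 : z % 2 = 1 := by
    have h3 : ((4 ^ x + 7 ^ y : ℕ) : ZMod 3) = ((5 ^ z : ℕ) : ZMod 3) := by rw [h]
    push_cast at h3
    have e4 : (4 : ZMod 3) = 1 := by decide
    have e7 : (7 : ZMod 3) = 1 := by decide
    have e5 : (5 : ZMod 3) = 2 := by decide
    rw [e4, e7, e5, one_pow, one_pow] at h3
    rw [← Nat.div_add_mod z 2, pow_add, pow_mul] at h3
    have e2 : (2 : ZMod 3) ^ 2 = 1 := by decide
    rw [e2, one_pow, one_mul] at h3
    rcases Nat.mod_two_eq_zero_or_one z with h' | h'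
    · rw [h'] at h3; exact absurd h3 (by decide)
    · exact h'
  -- y even, via mod 4
  have hy2 : y % 2 = 0 := by
    have h4 : ((4 ^ x + 7 ^ y : ℕ) : ZMod 4) = ((5 ^ z : ℕ) : ZMod 4) := by rw [h]
    push_cast at h4
    have e4 : (4 : ZMod 4) = 0 := by decide
    have e7 : (7 : ZMod 4) = 3 := by decide
    have e5 : (5 : ZMod 4) = 1 := by decide
    rw [e4, e7, e5, one_pow, zero_pow hx.ne', zero_add] at h4
    rw [← Nat.div_add_mod y 2, pow_add, pow_mul] at h4
    have e3 : (3 : ZMod 4) ^ 2 = 1 := by decide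
    rw [e3, one_pow, one_mul] at h4
    rcases Nat.mod_two_eq_zero_or_one y with h' | h'
    · exact h'
    · rw [h'] at h4; exact absurd h4 (by decide)
  -- x = 1, via mod 8
  have hx1 : x = 1 := by
    by_contra hne
    have hx2 : 2 ≤ x := by omega
    obtain ⟨k, rfl⟩ : ∃ k, x = k + 2 := ⟨x - 2, by omega⟩
    have h8 : ((4 ^ (k + 2) + 7 ^ y : ℕ) : ZMod 8) = ((5 ^ z : ℕ) : ZMod 8) := by rw [h]
    push_cast at h8
    have e4 : (4 : ZMod 8) ^ (k + 2) = 0 := by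
      rw [pow_add]
      have : (4 : ZMod 8) ^ 2 = 0 := by decide
      rw [this, mul_zero]
    rw [e4, zero_add] at h8
    rw [← Nat.div_add_mod y 2, pow_add, pow_mul, hy2] at h8
    rw [← Nat.div_add_mod z 2, pow_add, pow_mul, hz2] at h8
    have e7 : (7 : ZMod 8) ^ 2 = 1 := by decide
    have e5 : (5 : ZMod 8) ^ 2 = 1 := by decide
    rw [e7, e5, one_pow, one_pow] at h8
    exact absurd h8 (by decide)
  -- mod 7: 4 ≡ 5^z, forces z ≡ 2 mod 6, i.e. z even; contradiction
  subst hx1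
  have h7 : ((4 ^ 1 + 7 ^ y : ℕ) : ZMod 7) = ((5 ^ z : ℕ) : ZMod 7) := by rw [h]
  push_cast at h7
  have e7 : (7 : ZMod 7) = 0 := by decide
  rw [e7, zero_pow hy.ne'] at h7
  rw [← Nat.div_add_mod z 6, pow_add, pow_mul] at h7
  have e5 : (5 : ZMod 7) ^ 6 = 1 := by decide
  rw [e5, one_pow, one_mul] at h7
  have hlt : z % 6 < 6 := Nat.mod_lt z (by norm_num)
  have hmod : z % 6 % 2 = 1 := by omega
  interval_cases h' : z % 6 <;> simp_all <;> exact absurd h7 (by decide)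
end

section
/- There are no positive integers n, x, y, z with n ≥ 2, x odd, y odd, and z even, satisfying (n-1)^x + (n+2)^y = n^z. -/
lemma trich3 : ∀ t : ZMod 3, t = 0 ∨ t = 1 ∨ t = 2 := by decide

lemma oddpow3 (t : ZMod 3) (k : ℕ) : t ^ (2*k+1) = t := by
  rw [pow_add, pow_mul, pow_one]
  rcases trich3 t with rfl | rfl | rfl
  · simp
  · simp
  · have h : (2:ZMod 3)^2 = 1 := by decide
    rw [h, one_pow, one_mul]

lemma key3 (m : ZMod 3) (a b d : ℕ) :
    (m-1)^(2*a+1) + (m+2)^(2*b+1) ≠ m^((d+1)+(d+1)) := by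
  rw [oddpow3, oddpow3, ← two_mul, pow_mul, pow_succ, mul_comm]
  rcases trich3 m with rfl | rfl | rfl
  · have h : (0:ZMod 3)^2 = 0 := by decide
    rw [h, zero_mul]; decide
  · have h : (1:ZMod 3)^2 = 1 := by decide
    rw [h, one_pow, one_mul]; decide
  · have h : (2:ZMod 3)^2 = 1 := by decide
    rw [h, one_pow, one_mul]; decide

theorem stmt_8 : ¬ ∃ n x y z : ℕ, 2 ≤ n ∧ 0 < x ∧ 0 < y ∧ 0 < z ∧
    Odd x ∧ Odd y ∧ Even z ∧ (n - 1) ^ x + (n + 2) ^ y = n ^ z := by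
  rintro ⟨n, x, y, z, hn, hx, hy, hz, ⟨a, rfl⟩, ⟨b, rfl⟩, ⟨c, rfl⟩, heq⟩
  obtain ⟨d, rfl⟩ : ∃ d, c = d + 1 := ⟨c - 1, by omega⟩
  have h3 := congrArg (Nat.cast : ℕ → ZMod 3) heq
  push_cast [Nat.cast_sub (by omega : 1 ≤ n)] at h3
  exact key3 (n : ZMod 3) a b d h3
end

section
/- Let n ≥ 2, x, y, z be positive integers with x, y, z all odd, satisfying (n-1)^x + (n+2)^y = n^z. Then n ≡ 7 (mod 8). -/
private lemma pow_two_mul_add_three (a : ZMod 8) : ∀ m, a ^ (2 * m + 3) = a ^ 3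
  | 0 => by norm_num
  | m + 1 => by
    rw [show 2 * (m + 1) + 3 = (2 * m + 3) + 2 by ring, pow_add,
      pow_two_mul_add_three a m, ← pow_add]
    revert a; decide

private lemma odd_pow_mem (a : ZMod 8) {k : ℕ} (hk : Odd k) :
    a ^ k = a ∨ a ^ k = a ^ 3 := by
  obtain ⟨m, rfl⟩ := hk
  cases m with
  | zero => left; norm_num
  | succ m =>
    right
    rw [show 2 * (m + 1) + 1 = 2 * m + 3 by ring, pow_two_mul_add_three]

theorem stmt_10 (n x y z : ℕ) (hn : 2 ≤ n) (hx : 0 < x) (hy : 0 < y) (hz : 0 < z)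
    (hox : Odd x) (hoy : Odd y) (hoz : Odd z)
    (heq : (n - 1) ^ x + (n + 2) ^ y = n ^ z) :
    n % 8 = 7 := by
  have h8 : ((n : ZMod 8) - 1) ^ x + ((n : ZMod 8) + 2) ^ y = (n : ZMod 8) ^ z := by
    have h := congrArg (Nat.cast : ℕ → ZMod 8) heq
    push_cast [Nat.cast_sub (by omega : 1 ≤ n)] at h
    exact h
  have key : ∀ b p q r : ZMod 8, (p = b - 1 ∨ p = (b - 1) ^ 3) →
      (q = b + 2 ∨ q = (b + 2) ^ 3) → (r = b ∨ r = b ^ 3) → p + q = r → b = 7 := by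
    decide
  have hp := odd_pow_mem ((n : ZMod 8) - 1) hox
  have hq := odd_pow_mem ((n : ZMod 8) + 2) hoy
  have hr := odd_pow_mem (n : ZMod 8) hoz
  have hb : (n : ZMod 8) = 7 := key _ _ _ _ hp hq hr h8
  have := congrArg ZMod.val hb
  rwa [ZMod.val_natCast] at this
end

section
/- There are no positive integers n, x, y, z with n ≥ 2, x, y, z all odd and x ≥ 3, satisfying (n-1)^x + (n+2)^y = n^z. -/
lemma odd_pow_zmod4 (m : ℕ) (hm : m % 2 = 1) {k : ℕ} (hk : Odd k) :
    ((m : ZMod 4)) ^ k = (m : ZMod 4) := by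
  obtain ⟨d, rfl⟩ := hk
  have h4 : m % 4 = 1 ∨ m % 4 = 3 := by omega
  have hsq : ((m : ZMod 4)) ^ 2 = 1 := by
    have hcast : ((m : ZMod 4)) = ((m % 4 : ℕ) : ZMod 4) := (ZMod.natCast_mod m 4).symm
    rw [hcast]
    rcases h4 with h | h <;> rw [h] <;> decide
  calc (m : ZMod 4) ^ (2 * d + 1) = ((m : ZMod 4) ^ 2) ^ d * m := by ring
  _ = m := by rw [hsq, one_pow, one_mul]

theorem stmt_11 : ¬ ∃ n x y z : ℕ, 2 ≤ n ∧ 3 ≤ x ∧ 0 < y ∧ 0 < z ∧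
    Odd x ∧ Odd y ∧ Odd z ∧ (n - 1) ^ x + (n + 2) ^ y = n ^ z := by
  rintro ⟨n, x, y, z, hn, hx, hy, hz, hxo, hyo, hzo, heq⟩
  rcases Nat.even_or_odd n with he | ho
  · -- n even: LHS odd, RHS even
    have hn2 : n % 2 = 0 := Nat.even_iff.mp he
    have e1 : (n - 1) % 2 = 1 := by omega
    have e2 : (n + 2) % 2 = 0 := by omega
    have l1 : (n - 1) ^ x % 2 = 1 := by
      rw [Nat.pow_mod, e1, one_pow]
      simp
    have l2 : (n + 2) ^ y % 2 = 0 := by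
      rw [Nat.pow_mod, e2, zero_pow hy.ne']
      simp
    have r1 : n ^ z % 2 = 0 := by
      rw [Nat.pow_mod, hn2, zero_pow hz.ne']
      simp
    omega
  · -- n odd: work mod 4
    have hn2 : n % 2 = 1 := Nat.odd_iff.mp ho
    have hdvd : 4 ∣ (n - 1) ^ x := by
      obtain ⟨m, hm⟩ : ∃ m, n - 1 = 2 * m := ⟨(n - 1) / 2, by omega⟩
      rw [hm, mul_pow]
      exact dvd_mul_of_dvd_left
        (dvd_trans (by norm_num : (4:ℕ) ∣ 2 ^ 2) (pow_dvd_pow 2 (by omega))) _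
    have hc : (((n - 1) ^ x : ℕ) : ZMod 4) + (((n + 2) ^ y : ℕ) : ZMod 4)
        = ((n ^ z : ℕ) : ZMod 4) := by
      rw [← Nat.cast_add, heq]
    have h0 : (((n - 1) ^ x : ℕ) : ZMod 4) = 0 :=
      (ZMod.natCast_eq_zero_iff _ _).mpr hdvd
    have h1 : (((n + 2) ^ y : ℕ) : ZMod 4) = ((n : ZMod 4) + 2) := by
      rw [Nat.cast_pow, odd_pow_zmod4 (n + 2) (by omega) hyo]
      push_cast
      ring
    have h2 : ((n ^ z : ℕ) : ZMod 4) = (n : ZMod 4) := by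
      push_cast
      exact odd_pow_zmod4 n hn2 hzo
    rw [h0, h1, h2, zero_add] at hc
    have : (2 : ZMod 4) = 0 := by
      have := hc
      nth_rewrite 2 [← add_zero (n : ZMod 4)] at this
      exact add_left_cancel this
    exact absurd this (by decide)
end

section
/- There are no integers n, y, z with n ≥ 71, n ≡ 7 (mod 8), y and z odd, z > y > n, satisfying n - 1 + (n+2)^y = n^z. -/
lemma one_add_sq_zero_pow {R : Type*} [CommRing R] (c : R) (hc : c ^ 2 = 0) :
    ∀ k : ℕ, (1 + c) ^ k = 1 + (k : R) * c := by
  intro k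
  induction k with
  | zero => simp
  | succ k ih =>
    rw [pow_succ, ih]
    push_cast
    linear_combination (k : R) * hc

theorem stmt_12 : ¬ ∃ n y z : ℕ, 71 ≤ n ∧ n % 8 = 7 ∧ Odd y ∧ Odd z ∧
    z > y ∧ y > n ∧ n - 1 + (n + 2) ^ y = n ^ z := by
  rintro ⟨n, y, z, hn, hn8, hy, hz, -, -, heq⟩
  have hn1 : n + 1 ≠ 0 := by omega
  set a := (n + 1).factorization 2 with ha
  have hdvd : 2 ^ a ∣ n + 1 := Nat.ordProj_dvd _ _
  have hndvd : ¬ 2 ^ (a + 1) ∣ n + 1 :=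
    Nat.pow_succ_factorization_not_dvd hn1 Nat.prime_two
  have h3 : 3 ≤ a := by
    have h8 : 2 ^ 3 ∣ n + 1 := by omega
    exact (Nat.Prime.pow_dvd_iff_le_factorization Nat.prime_two hn1).mp h8
  set M := 2 ^ (a + 1) with hM
  haveI : NeZero M := ⟨by positivity⟩
  set c : ZMod M := ((n + 1 : ℕ) : ZMod M) with hcdef
  have hc0 : c ≠ 0 := by
    rw [hcdef, Ne, ZMod.natCast_eq_zero_iff]
    exact hndvd
  have hc2 : (2 : ZMod M) * c = 0 := by
    have hd : M ∣ 2 * (n + 1) := by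
      obtain ⟨m, hm⟩ := hdvd
      exact ⟨m, by rw [hM, pow_succ, hm]; ring⟩
    have h0 := (ZMod.natCast_eq_zero_iff _ _).mpr hd
    push_cast at h0
    rw [hcdef]
    push_cast
    linear_combination h0
  have hcsq : c ^ 2 = 0 := by
    have hd : M ∣ (n + 1) ^ 2 := by
      obtain ⟨m, hm⟩ := hdvd
      refine ⟨2 ^ (a - 1) * m ^ 2, ?_⟩
      rw [hm, hM, mul_pow, ← pow_mul, show a * 2 = (a + 1) + (a - 1) from by omega,
        pow_add]
      ring
    have h0 := (ZMod.natCast_eq_zero_iff _ _).mpr hd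
    push_cast at h0
    rw [hcdef]
    push_cast
    linear_combination h0
  obtain ⟨t, ht⟩ := hy
  obtain ⟨s, hs⟩ := hz
  have hyc : (y : ZMod M) * c = c := by
    subst ht; push_cast; linear_combination (t : ZMod M) * hc2
  have hzc : (z : ZMod M) * c = c := by
    subst hs; push_cast; linear_combination (s : ZMod M) * hc2
  have hN : (n : ZMod M) = c - 1 := by rw [hcdef]; push_cast; ring
  have heqZ : ((n : ZMod M) - 1) + ((n : ZMod M) + 2) ^ y = (n : ZMod M) ^ z := by
    have h0 := congrArg (Nat.cast : ℕ → ZMod M) heq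
    push_cast [Nat.cast_sub (show 1 ≤ n by omega)] at h0
    exact h0
  have e1 : ((n : ZMod M) + 2) ^ y = 1 + c := by
    rw [hN, show c - 1 + 2 = 1 + c by ring, one_add_sq_zero_pow c hcsq y, hyc]
  have e2 : (n : ZMod M) ^ z = c - 1 := by
    have hmc : (-c) ^ 2 = 0 := by linear_combination hcsq
    rw [hN, show c - 1 = -(1 + -c) by ring, Odd.neg_pow ⟨s, hs⟩,
      one_add_sq_zero_pow (-c) hmc z]
    linear_combination hzc
  rw [e1, e2, hN] at heqZ
  exact hc0 (by linear_combination heqZ)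
end

section
/- There are no positive integers n, x, y, z with n > 64, y odd, and x even satisfying (n-1)^x + (n+2)^y = n^z. -/
private lemma odd_pow_mod (a M j : ℕ) (h : a ^ 2 % M = 1 % M) :
    a ^ (2 * j + 1) % M = a % M := by
  rw [pow_succ, pow_mul, Nat.mul_mod, Nat.pow_mod, h, ← Nat.pow_mod, one_pow,
    ← Nat.mul_mod, one_mul]

private lemma even_pow_mod (a M k : ℕ) (h : a ^ 2 % M = 1 % M) :
    a ^ (2 * k) % M = 1 % M := by
  rw [pow_mul, Nat.pow_mod, h, ← Nat.pow_mod, one_pow]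

private lemma mod8_closure : ∀ N : ℕ, N ≠ 0 →
    (∀ p, Nat.Prime p → p ∣ N → (p % 8 = 1 ∨ p % 8 = 3)) → N % 8 = 1 ∨ N % 8 = 3 := by
  intro N
  induction N using Nat.strong_induction_on with
  | _ N ih =>
    intro hN0 hprimes
    rcases eq_or_ne N 1 with rfl | hN1
    · left; rfl
    · have hp := Nat.minFac_prime hN1
      have hd := Nat.minFac_dvd N
      have hNm : N = N.minFac * (N / N.minFac) := (Nat.mul_div_cancel' hd).symm
      have hm0 : N / N.minFac ≠ 0 := by
        intro h; rw [h, mul_zero] at hNm; exact hN0 hNm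
      have hmlt : N / N.minFac < N := Nat.div_lt_self (Nat.pos_of_ne_zero hN0) hp.one_lt
      have hrec := ih _ hmlt hm0
        (fun q hq hqd => hprimes q hq (hqd.trans (Nat.div_dvd_of_dvd hd)))
      have hp8 := hprimes _ hp hd
      rw [hNm, Nat.mul_mod]
      rcases hp8 with h1 | h1 <;> rcases hrec with h2 | h2 <;> rw [h1, h2] <;> decide

set_option maxHeartbeats 1000000 in
theorem stmt_19 : ¬ ∃ n x y z : ℕ, 64 < n ∧ 0 < x ∧ 0 < y ∧ 0 < z ∧
    Odd y ∧ Even x ∧ (n - 1) ^ x + (n + 2) ^ y = n ^ z := by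
  rintro ⟨n, x, y, z, hn, hx, hy, hz, hyo, hxe, heq0⟩
  obtain ⟨m, rfl⟩ : ∃ m, n = m + 65 := ⟨n - 65, by omega⟩
  obtain ⟨j, hj⟩ := hyo
  obtain ⟨i, hi⟩ := hxe
  have hx2 : x = 2 * i := by omega
  have hi1 : 1 ≤ i := by omega
  have heq : (m + 64) ^ x + (m + 67) ^ y = (m + 65) ^ z := by
    have e : m + 65 - 1 = m + 64 := by omega
    have e2 : m + 65 + 2 = m + 67 := by omega
    rwa [e, e2] at heq0
  -- Step 1 : (m+65) ∣ 2^y + 1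
  have hdvd : (m + 65) ∣ 2 ^ y + 1 := by
    have e1 : (m + 64) ^ x % (m + 65) = 1 % (m + 65) := by
      rw [hx2, pow_mul, Nat.pow_mod]
      have e : (m + 64) ^ 2 % (m + 65) = 1 % (m + 65) := by
        have h' : (m + 64) ^ 2 = (m + 65) * (m + 63) + 1 := by ring
        rw [h', Nat.mul_add_mod]
      rw [e, ← Nat.pow_mod, one_pow]
    have e2 : (m + 67) ^ y % (m + 65) = 2 ^ y % (m + 65) := by
      rw [Nat.pow_mod]
      have e : (m + 67) % (m + 65) = 2 % (m + 65) := by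
        have h' : m + 67 = (m + 65) + 2 := by ring
        rw [h', Nat.add_mod_left]
      rw [e, ← Nat.pow_mod]
    have e3 : (m + 65) ^ z % (m + 65) = 0 := by
      rw [Nat.pow_mod, Nat.mod_self, zero_pow hz.ne', Nat.zero_mod]
    have h := congrArg (· % (m + 65)) heq
    rw [Nat.add_mod, e1, e2, e3] at h
    apply Nat.dvd_of_mod_eq_zero
    rw [Nat.add_mod]
    have h2lt : 2 ^ y % (m + 65) = (2 ^ y) % (m + 65) := rfl
    rw [Nat.add_comm (2 ^ y % (m + 65)) (1 % (m + 65))]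
    exact h
  -- n odd
  have h2y : (2 : ℕ) ∣ 2 ^ y := dvd_pow_self 2 hy.ne'
  have hm2 : m % 2 = 0 := by
    by_contra h
    have h2n : (2 : ℕ) ∣ m + 65 := by omega
    obtain ⟨r, hr⟩ := h2n.trans hdvd
    obtain ⟨s, hs⟩ := h2y
    omega
  -- Step 3 : every prime factor of m+65 is 1 or 3 mod 8
  have hp8 : ∀ p, Nat.Prime p → p ∣ (m + 65) → (p % 8 = 1 ∨ p % 8 = 3) := by
    intro p hp hpd
    have hpdvd : p ∣ 2 ^ y + 1 := hpd.trans hdvd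
    have hpodd : p ≠ 2 := by
      rintro rfl
      obtain ⟨r, hr⟩ := hpdvd
      obtain ⟨s, hs⟩ := h2y
      omega
    haveI : Fact p.Prime := ⟨hp⟩
    have h0 : ((2 ^ y + 1 : ℕ) : ZMod p) = 0 :=
      (ZMod.natCast_eq_zero_iff _ _).mpr hpdvd
    push_cast at h0
    have h2 : (2 : ZMod p) ^ y = -1 := by linear_combination h0
    have hsq : IsSquare (-2 : ZMod p) := by
      refine ⟨2 ^ (j + 1), ?_⟩
      rw [← pow_add]
      have hE : (j + 1) + (j + 1) = y + 1 := by omega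
      rw [hE, pow_succ, h2]
      ring
    rwa [ZMod.exists_sq_eq_neg_two_iff hpodd] at hsq
  have hN8 := mod8_closure (m + 65) (by omega) hp8
  -- Step 4 : rule out n ≡ 1 mod 8 (mod 4 argument), so m % 8 = 2
  have hm8 : m % 8 = 2 := by
    rcases hN8 with h1 | h1
    · exfalso
      have hm80 : m % 8 = 0 := by omega
      -- mod 4 : (m+64)^x ≡ 0, (m+67)^y ≡ 3, (m+65)^z ≡ 1
      have eA : (m + 64) ^ x % 4 = 0 := by
        have h4 : (4 : ℕ) ∣ m + 64 := by omega
        have := dvd_pow h4 hx.ne'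
        omega
      have eB : (m + 67) ^ y % 4 = 3 := by
        have hsq : (m + 67) ^ 2 % 4 = 1 % 4 := by
          rw [Nat.pow_mod, show (m + 67) % 4 = 3 by omega]
        rw [hj, odd_pow_mod _ _ _ hsq]
        omega
      have eC : (m + 65) ^ z % 4 = 1 := by
        have h4 : (4 : ℕ) ∣ m + 64 := by omega
        have hsq : (m + 65) ^ 2 % 4 = 1 % 4 := by
          rw [Nat.pow_mod, show (m + 65) % 4 = 1 by omega]
        have : (m + 65) ^ z % 4 = 1 % 4 := by
          rcases Nat.even_or_odd z with hze | hzo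
          · obtain ⟨k, hk⟩ := hze
            rw [show z = 2 * k by omega, even_pow_mod _ _ _ hsq]
          · obtain ⟨k, hk⟩ := hzo
            rw [hk, odd_pow_mod _ _ _ hsq]
            omega
        omega
      have h := congrArg (· % 4) heq
      rw [Nat.add_mod, eA, eB, eC] at h
      omega
    · omega
  -- Step 5 : z is even
  have hzeven : ∃ k, z = 2 * k := by
    rcases Nat.even_or_odd z with hze | hzo
    · obtain ⟨k, hk⟩ := hze; exact ⟨k, by omega⟩
    · exfalso
      obtain ⟨k, hk⟩ := hzo
      have eA : (m + 64) ^ x % 4 = 0 := by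
        obtain ⟨s, hs⟩ : ∃ s, m = 2 * s := ⟨m / 2, by omega⟩
        have h0 : (m + 64) ^ 2 % 4 = 0 := by
          have h' : (m + 64) ^ 2 = (s + 32) ^ 2 * 4 := by rw [hs]; ring
          rw [h', Nat.mul_mod_left]
        rw [hx2, pow_mul, Nat.pow_mod, h0, zero_pow (by omega : i ≠ 0), Nat.zero_mod]
      have eB : (m + 67) ^ y % 4 = 1 := by
        have hsq : (m + 67) ^ 2 % 4 = 1 % 4 := by
          rw [Nat.pow_mod, show (m + 67) % 4 = 1 by omega]
        rw [hj, odd_pow_mod _ _ _ hsq]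
        omega
      have eC : (m + 65) ^ z % 4 = 3 := by
        have hsq : (m + 65) ^ 2 % 4 = 1 % 4 := by
          rw [Nat.pow_mod, show (m + 65) % 4 = 3 by omega]
        rw [hk, odd_pow_mod _ _ _ hsq]
        omega
      have h := congrArg (· % 4) heq
      rw [Nat.add_mod, eA, eB, eC] at h
      omega
  obtain ⟨k, hk⟩ := hzeven
  have hk1 : 1 ≤ k := by omega
  -- Step 6 : x = 2
  have hxx : x = 2 := by
    rcases eq_or_ne i 1 with h1 | h1
    · omega
    · exfalso
      have hi2 : 2 ≤ i := by omega
      have eA : (m + 64) ^ x % 8 = 0 := by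
        obtain ⟨s, hs⟩ : ∃ s, m = 2 * s := ⟨m / 2, by omega⟩
        have h8 : (8 : ℕ) ∣ (m + 64) ^ 3 := ⟨(s + 32) ^ 3, by rw [hs]; ring⟩
        have := h8.trans (pow_dvd_pow _ (show 3 ≤ x by omega))
        omega
      have eB : (m + 67) ^ y % 8 = 5 := by
        have hsq : (m + 67) ^ 2 % 8 = 1 % 8 := by
          rw [Nat.pow_mod, show (m + 67) % 8 = 5 by omega]
        rw [hj, odd_pow_mod _ _ _ hsq]
        omega
      have eC : (m + 65) ^ z % 8 = 1 := by
        have hsq : (m + 65) ^ 2 % 8 = 1 % 8 := by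
          rw [Nat.pow_mod, show (m + 65) % 8 = 3 by omega]
        rw [hk, even_pow_mod _ _ _ hsq]
      have h := congrArg (· % 8) heq
      rw [Nat.add_mod, eA, eB, eC] at h
      omega
  rw [hxx] at heq
  -- Step 7 : k ≥ 2 (i.e. z ≥ 4)
  have hk2 : 2 ≤ k := by
    by_contra h
    have hk1' : k = 1 := by omega
    have hz2 : z = 2 := by omega
    rw [hz2] at heq
    rcases eq_or_ne j 0 with hj0 | hj0
    · rw [show y = 1 by omega, pow_one] at heq
      nlinarith
    · have hy3 : 3 ≤ y := by omega
      have h3 : (m + 67) ^ 3 ≤ (m + 67) ^ y := Nat.pow_le_pow_right (by omega) hy3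
      nlinarith
  -- Step 8 : y ≥ 5
  have hy5 : 5 ≤ y := by
    by_contra h
    have hy3 : y ≤ 3 := by omega
    have h3 : (m + 67) ^ y ≤ (m + 67) ^ 3 := Nat.pow_le_pow_right (by omega) hy3
    have h4 : (m + 65) ^ 4 ≤ (m + 65) ^ z := Nat.pow_le_pow_right (by omega) (by omega)
    nlinarith
  -- Step 9 : factorization
  have hAgt : m + 64 < (m + 65) ^ k := by
    have h2 : (m + 65) ^ 2 ≤ (m + 65) ^ k := Nat.pow_le_pow_right (by omega) hk2
    nlinarith
  obtain ⟨c, hc⟩ : ∃ c, (m + 65) ^ k = (m + 64) + c := ⟨(m + 65) ^ k - (m + 64), by omega⟩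
  have hc1 : 1 ≤ c := by omega
  have hprodZ : (c : ℤ) * ((c : ℤ) + 2 * ((m : ℤ) + 64)) = ((m : ℤ) + 67) ^ y := by
    have hcast := congrArg (Nat.cast : ℕ → ℤ) heq
    push_cast at hcast
    have hcast2 := congrArg (Nat.cast : ℕ → ℤ) hc
    push_cast at hcast2
    have hzz : ((m : ℤ) + 65) ^ z = ((m : ℤ) + 65) ^ k * ((m : ℤ) + 65) ^ k := by
      rw [show z = k + k by omega, pow_add]
    rw [hzz, hcast2] at hcast
    linear_combination -hcast
  -- coprimality
  have hAodd : (m + 65) ^ k % 2 = 1 := by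
    have : Odd ((m + 65) ^ k) := Odd.pow (Nat.odd_iff.mpr (by omega))
    exact Nat.odd_iff.mp this
  have hcodd : c % 2 = 1 := by omega
  have hco : Nat.Coprime c (c + 2 * (m + 64)) := by
    rw [Nat.Coprime]
    by_contra h
    obtain ⟨q, hq, hqd⟩ := Nat.exists_prime_and_dvd h
    have hq1 : q ∣ c := hqd.trans (Nat.gcd_dvd_left _ _)
    have hq2 : q ∣ c + 2 * (m + 64) := hqd.trans (Nat.gcd_dvd_right _ _)
    have hq3 : q ∣ 2 * (m + 64) := (Nat.dvd_add_right hq1).mp hq2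
    have hqne2 : q ≠ 2 := by
      rintro rfl
      obtain ⟨r, hr⟩ := hq1
      omega
    have hq4 : q ∣ m + 64 := by
      rcases (Nat.Prime.dvd_mul hq).mp hq3 with h' | h'
      · exact absurd ((Nat.prime_dvd_prime_iff_eq hq Nat.prime_two).mp h') hqne2
      · exact h'
    have hq5 : q ∣ (m + 65) ^ k := by rw [hc]; exact dvd_add hq4 hq1
    have hq6 : q ∣ m + 65 := hq.dvd_of_dvd_pow hq5
    have hq7 : q ∣ 1 := by
      have := Nat.dvd_sub hq6 hq4
      simpa [show m + 65 - (m + 64) = 1 by omega] using this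
    exact hq.one_lt.ne' (Nat.dvd_one.mp hq7)
  have hcoZ : IsCoprime (c : ℤ) ((c : ℤ) + 2 * ((m : ℤ) + 64)) := by
    have h' := Nat.isCoprime_iff_coprime.mpr hco
    push_cast at h'
    convert h' using 2 <;> ring
  have hyodd : Odd y := ⟨j, hj⟩
  obtain ⟨⟨u, hu⟩, ⟨v, hv⟩⟩ := Int.eq_pow_of_mul_eq_pow_odd hcoZ hyodd hprodZ
  have hm0 : (0 : ℤ) ≤ (m : ℤ) := Int.natCast_nonneg m
  have hcZ1 : (1 : ℤ) ≤ (c : ℤ) := by exact_mod_cast hc1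
  have hu1 : 1 ≤ u := by
    by_contra h
    have : u ≤ 0 := by omega
    have := hyodd.pow_nonpos this
    rw [← hu] at this
    linarith
  have hv1 : 1 ≤ v := by
    by_contra h
    have : v ≤ 0 := by omega
    have := hyodd.pow_nonpos this
    rw [← hv] at this
    linarith [hm0]
  have hvy : v ^ y = u ^ y + 2 * ((m : ℤ) + 64) := by
    rw [← hu, ← hv]
  have huv_lt : u < v := by
    by_contra h
    have h' : v ≤ u := by omega
    have := pow_le_pow_left₀ (by linarith : (0:ℤ) ≤ v) h' y
    linarith [hvy, hm0]
  have huv : u * v = (m : ℤ) + 67 := by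
    have hpow : (u * v) ^ y = ((m : ℤ) + 67) ^ y := by
      rw [mul_pow, ← hu, ← hv]; exact hprodZ
    rcases lt_trichotomy (u * v) ((m : ℤ) + 67) with h' | h' | h'
    · have := pow_lt_pow_left₀ h' (mul_nonneg (by linarith) (by linarith)) hy.ne'
      linarith [hpow]
    · exact h'
    · have := pow_lt_pow_left₀ h' (by positivity) hy.ne'
      linarith [hpow]
  -- final size contradiction
  obtain ⟨w, hw⟩ : ∃ w, y = w + 1 := ⟨y - 1, by omega⟩
  have hw4 : 4 ≤ w := by omega
  have hvy' : v ^ w * v = u ^ w * u + 2 * ((m : ℤ) + 64) := by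
    have := hvy
    rw [hw, pow_succ, pow_succ] at this
    exact this
  have huw : u ^ w ≤ v ^ w := pow_le_pow_left₀ (by linarith only [hu1]) (by linarith only [huv_lt]) w
  have hu0 : (0:ℤ) ≤ u := by linarith only [hu1]
  have hv0 : (0:ℤ) ≤ v := by linarith only [hv1]
  have huv1 : u + 1 ≤ v := by linarith only [huv_lt]
  have hkey : v ^ w ≤ 2 * ((m : ℤ) + 64) := by
    have p1 : u ^ w * u ≤ v ^ w * u := mul_le_mul_of_nonneg_right huw hu0
    have p2 : v ^ w * (u + 1) ≤ v ^ w * v :=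
      mul_le_mul_of_nonneg_left huv1 (pow_nonneg hv0 w)
    have p3 : v ^ w * (u + 1) = v ^ w * u + v ^ w := by ring
    linarith only [p1, p2, p3, hvy']
  have hv2 : (m : ℤ) + 68 ≤ v ^ 2 := by
    have q1 : (u + 1) * v ≤ v * v := mul_le_mul_of_nonneg_right huv1 hv0
    have q2 : (u + 1) * v = u * v + v := by ring
    have q3 : v * v = v ^ 2 := by ring
    linarith only [q1, q2, q3, huv, hv1]
  have h7 : v ^ 4 ≤ v ^ w := pow_le_pow_right₀ (by linarith only [hv1]) hw4
  have h8 : ((m : ℤ) + 68) ^ 2 ≤ (v ^ 2) ^ 2 := pow_le_pow_left₀ (by positivity) hv2 2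
  have h9 : (v ^ 2) ^ 2 = v ^ 4 := by ring
  rw [h9] at h8
  have hchain : ((m : ℤ) + 68) ^ 2 ≤ 2 * ((m : ℤ) + 64) := le_trans h8 (le_trans h7 hkey)
  have hexp : ((m : ℤ) + 68) ^ 2 = (m : ℤ) * (m : ℤ) + 136 * (m : ℤ) + 4624 := by ring
  linarith only [hexp, hchain, hm0, mul_nonneg hm0 hm0]
end
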